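/- Let Γ be a connected finite simplicial graph and let v, v′ be vertices whose equivalence classes [v], [v′] are maximal with respect to ≤. Then there exists a finite sequence of vertices v = u₀, u₁, …, u_n = v′ such that each [uᵢ] is maximal and, for each i, either uᵢ ∼ uᵢ₊₁ or uᵢ is adjacent to uᵢ₊₁ in Γ. (Equivalently, the graph Γ₀ whose vertices are the maximal equivalence classes, with [u] and [w] joined by an edge iff u and w are adjacent in Γ, is connected.) -/

import Mathlib

/-!
Every vertex lies below some maximal class, by finiteness. If `m` is maximal and `x ∈ st(m)` lies
below a maximal `m'`, then `m ∼ m'` or `m` is adjacent to `m'`: for `x = m` this is maximality,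
otherwise `m ∈ lk(x) ⊆ st(m')`. So along a path `v = w₀, …, w_k = v'` in `Γ`, choose maximal
`mᵢ ≥ wᵢ` with `m₀ = v`; since `wᵢ₊₁ ∈ lk(wᵢ) ⊆ st(mᵢ)`, consecutive `mᵢ` are equivalent or
adjacent, and at the end `m_k ≥ v'` forces `m_k ∼ v'` by maximality of `[v']`.
-/

open SimpleGraph

namespace RaagPaper

variable {V : Type*}

/-- The link of a vertex: the set of vertices adjacent to it. -/
def lk (G : SimpleGraph V) (v : V) : Set V := G.neighborSet v

/-- The (closed) star of a vertex: `st(v) = lk(v) ∪ {v}`. -/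
def st (G : SimpleGraph V) (v : V) : Set V := insert v (G.neighborSet v)

/-- The preorder on vertices: `v ≤ w` iff `lk(v) ⊆ st(w)`. -/
def vle (G : SimpleGraph V) (v w : V) : Prop := lk G v ⊆ st G w

/-- Equivalence of vertices: `v ∼ w` iff `v ≤ w` and `w ≤ v`. -/
def vequiv (G : SimpleGraph V) (v w : V) : Prop := vle G v w ∧ vle G w v

/-- The equivalence class `[v]` of a vertex `v`. -/
def cls (G : SimpleGraph V) (v : V) : Set V := {u | vequiv G u v}

/-- `[v]` is maximal with respect to the partial order induced by `≤`. -/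
def IsMaximalClass (G : SimpleGraph V) (v : V) : Prop := ∀ w, vle G v w → vle G w v

/-- `L_[v] = lk(v) \ [v]`. -/
def Lset (G : SimpleGraph V) (v : V) : Set V := lk G v \ cls G v

/-- `J_[v] = [v] ∪ L_[v]`, the join associated to `[v]`. -/
def Jset (G : SimpleGraph V) (v : V) : Set V := cls G v ∪ Lset G v

/-- `v ∈ V_ab` : any two distinct vertices of `[v]` are adjacent (so `A_[v]` is abelian). -/
def Vab (G : SimpleGraph V) (v : V) : Prop :=
  ∀ x ∈ cls G v, ∀ y ∈ cls G v, x ≠ y → G.Adj x y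

theorem vle_refl (G : SimpleGraph V) (v : V) : vle G v v := fun _ hx => Or.inr hx

theorem vle_trans {G : SimpleGraph V} {u v w : V} (huv : vle G u v) (hvw : vle G v w) :
    vle G u w := by
  intro x hux
  rcases huv hux with rfl | hxv
  · rcases hvw (G.adj_symm hux : u ∈ lk G x) with rfl | huw
    · exact Or.inr hux
    · rcases huv (G.adj_symm huw : w ∈ lk G u) with rfl | hwx
      · exact Or.inl rfl
      · exact Or.inr (G.adj_symm hwx)
  · exact hvw hxv

abbrev vlePreorder (G : SimpleGraph V) : Preorder V where
  le := vle G
  le_refl := vle_refl G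
  le_trans _ _ _ := vle_trans

theorem exists_vle_isMaximalClass [Finite V] (G : SimpleGraph V) (w : V) :
    ∃ m, vle G w m ∧ IsMaximalClass G m := by
  let := vlePreorder G
  obtain ⟨m, hwm, -, hmax⟩ := Finite.exists_le_maximal (p := fun _ : V => True) trivial
  exact ⟨m, hwm, fun u hmu => hmax trivial hmu⟩

theorem IsMaximalClass.vequiv_or_adj_of_mem_st {G : SimpleGraph V} {m m' x : V}
    (hm : IsMaximalClass G m) (hx : x ∈ st G m) (hxm' : vle G x m') :
    vequiv G m m' ∨ G.Adj m m' := by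
  rcases hx with rfl | hmx
  · exact Or.inl ⟨hxm', hm _ hxm'⟩
  · rcases hxm' (G.adj_symm hmx : m ∈ lk G x) with rfl | hm'm
    · exact Or.inl ⟨vle_refl G m, vle_refl G m⟩
    · exact Or.inr (G.adj_symm hm'm)

/-- Representatives of maximal classes, joined when equivalent or adjacent. Collapsing each class
to a point gives the graph `Γ₀`, which therefore has the same connectivity. -/
def maximalClassGraph (G : SimpleGraph V) : SimpleGraph {m // IsMaximalClass G m} where
  Adj a b := a ≠ b ∧ (vequiv G a b ∨ G.Adj a b)
  symm := ⟨fun _ _ h => ⟨h.1.symm, h.2.imp And.symm G.adj_symm⟩⟩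
  loopless := ⟨fun _ h => h.1 rfl⟩

theorem maximalClassGraph_adj {G : SimpleGraph V} {a b : {m // IsMaximalClass G m}} :
    (maximalClassGraph G).Adj a b ↔ a ≠ b ∧ (vequiv G a b ∨ G.Adj a b) :=
  Iff.rfl

theorem maximalClassGraph_reachable {G : SimpleGraph V} {a b : {m // IsMaximalClass G m}}
    (h : vequiv G a b ∨ G.Adj a b) : (maximalClassGraph G).Reachable a b := by
  by_cases hab : a = b
  · exact hab ▸ Reachable.refl a
  · exact Adj.reachable (maximalClassGraph_adj.2 ⟨hab, h⟩)

theorem maximalClassGraph_reachable_of_walk [Finite V] {G : SimpleGraph V} {w w' : V}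
    (p : G.Walk w w') (hw' : IsMaximalClass G w') (m : {m // IsMaximalClass G m})
    (hwm : vle G w m) : (maximalClassGraph G).Reachable m ⟨w', hw'⟩ := by
  induction p generalizing m with
  | nil => exact maximalClassGraph_reachable (Or.inl ⟨hw' _ hwm, hwm⟩)
  | @cons w x _ hwx _ ih =>
    obtain ⟨mx, hxmx, hmx⟩ := exists_vle_isMaximalClass G x
    exact (maximalClassGraph_reachable (m.2.vequiv_or_adj_of_mem_st (hwm hwx) hxmx)).trans
      (ih hw' ⟨mx, hmx⟩ hxmx)

theorem maximalClassGraph_preconnected [Finite V] {G : SimpleGraph V} (hG : G.Preconnected) :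
    (maximalClassGraph G).Preconnected := fun a b =>
  let ⟨p⟩ := hG a b
  maximalClassGraph_reachable_of_walk p b.2 a (vle_refl G a)

theorem _root_.SimpleGraph.Reachable.exists_fin_path {W : Type*} {H : SimpleGraph W} {a b : W}
    (h : H.Reachable a b) : ∃ (n : ℕ) (u : Fin (n + 1) → W),
      u 0 = a ∧ u (Fin.last n) = b ∧ ∀ i : Fin n, H.Adj (u i.castSucc) (u i.succ) := by
  obtain ⟨p⟩ := h
  exact ⟨p.length, fun i => p.getVert i, p.getVert_zero, p.getVert_length,
    fun i => p.adj_getVert_succ i.isLt⟩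

theorem gammaZero_connected_general {V : Type*} [Fintype V] (G : SimpleGraph V)
    (hconn : G.Connected) (v v' : V)
    (hv : IsMaximalClass G v) (hv' : IsMaximalClass G v') :
    ∃ (n : ℕ) (u : Fin (n + 1) → V),
      u 0 = v ∧ u (Fin.last n) = v' ∧
      (∀ i, IsMaximalClass G (u i)) ∧
      (∀ i : Fin n, vequiv G (u i.castSucc) (u i.succ) ∨ G.Adj (u i.castSucc) (u i.succ)) := by
  obtain ⟨n, u, hu0, hulast, hadj⟩ :=
    (maximalClassGraph_preconnected hconn.preconnected ⟨v, hv⟩ ⟨v', hv'⟩).exists_fin_path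
  exact ⟨n, fun i => u i, congrArg Subtype.val hu0, congrArg Subtype.val hulast,
    fun i => (u i).2, fun i => (maximalClassGraph_adj.1 (hadj i)).2⟩

/-- the graph `Γ₀` of maximal equivalence classes is connected: any two maximal
classes are joined by a sequence of maximal classes in which consecutive classes are equal or
adjacent. -/
theorem gammaZero_connected {V : Type*} [Fintype V] [Nonempty V] (G : SimpleGraph V)
    (hconn : G.Connected) (v v' : V)
    (hv : IsMaximalClass G v) (hv' : IsMaximalClass G v') :
    ∃ (n : ℕ) (u : Fin (n + 1) → V),
      u 0 = v ∧ u (Fin.last n) = v' ∧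
      (∀ i, IsMaximalClass G (u i)) ∧
      (∀ i : Fin n, vequiv G (u i.castSucc) (u i.succ) ∨ G.Adj (u i.castSucc) (u i.succ)) :=
  gammaZero_connected_general G hconn v v' hv hv'

end RaagPaper
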